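/- arXiv:1106.2486 — 7 statements merged into one kernel-verified Lean document; each statement's English description precedes it below -/
import Mathlib

section
/- If A₀, A₁, B₀, B₁ are self-adjoint operators on Hilbert spaces H_A and H_B respectively, each squaring to the identity, and 𝓑 = A₀⊗B₀ + A₀⊗B₁ + A₁⊗B₀ − A₁⊗B₁, then 𝓑² = 4·𝟙 − [A₀,A₁]⊗[B₀,B₁]. -/
/-!
The identity is ring-theoretic: for involutions a₀, a₁, b₀, b₁ of any ring with every aᵢ
commuting with every bⱼ, expanding the square of a₀b₀ + a₀b₁ + a₁b₀ − a₁b₁ leaves four copies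
of 1 and the cross terms −(a₀a₁ − a₁a₀)(b₀b₁ − b₁b₀). On H_A ⊗ H_B take aᵢ = Aᵢ ⊗ 1 and
bⱼ = 1 ⊗ Bⱼ, whose products are Aᵢ ⊗ Bⱼ.
-/

open scoped TensorProduct

theorem chsh_mul_self_of_commute {R : Type*} [Ring R] {a₀ a₁ b₀ b₁ : R}
    (ha₀ : a₀ * a₀ = 1) (ha₁ : a₁ * a₁ = 1) (hb₀ : b₀ * b₀ = 1) (hb₁ : b₁ * b₁ = 1)
    (h₀₀ : Commute a₀ b₀) (h₀₁ : Commute a₀ b₁) (h₁₀ : Commute a₁ b₀) (h₁₁ : Commute a₁ b₁) :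
    (a₀ * b₀ + a₀ * b₁ + a₁ * b₀ - a₁ * b₁) * (a₀ * b₀ + a₀ * b₁ + a₁ * b₀ - a₁ * b₁)
      = 4 - (a₀ * a₁ - a₁ * a₀) * (b₀ * b₁ - b₁ * b₀) := by
  have cancel {x : R} (hx : x * x = 1) (y : R) : x * (x * y) = y := by
    rw [← mul_assoc, hx, one_mul]
  -- normal form: every bⱼ to the left of every aᵢ, then squares cancel
  simp only [add_mul, mul_add, sub_mul, mul_sub, mul_assoc, h₀₀.left_comm, h₀₁.left_comm,
    h₁₀.left_comm, h₁₁.left_comm, h₀₀.eq, h₀₁.eq, h₁₀.eq, h₁₁.eq, ha₀, ha₁, hb₀, hb₁,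
    cancel hb₀, cancel hb₁, mul_one]
  rw [show (4 : R) = 1 + 1 + 1 + 1 by norm_num]
  abel

namespace TensorProduct

variable {R M N : Type*} [CommRing R] [AddCommGroup M] [AddCommGroup N] [Module R M] [Module R N]

theorem map_eq_rTensor_mul_lTensor (f : Module.End R M) (g : Module.End R N) :
    map f g = f.rTensor N * g.lTensor M :=
  (LinearMap.rTensor_comp_lTensor _ f g).symm

theorem commute_rTensor_lTensor (f : Module.End R M) (g : Module.End R N) :
    Commute (f.rTensor N) (g.lTensor M) :=
  (LinearMap.rTensor_comp_lTensor _ f g).trans (LinearMap.lTensor_comp_rTensor _ f g).symm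

theorem chsh_mul_self {f₀ f₁ : Module.End R M} {g₀ g₁ : Module.End R N}
    (hf₀ : f₀ * f₀ = 1) (hf₁ : f₁ * f₁ = 1) (hg₀ : g₀ * g₀ = 1) (hg₁ : g₁ * g₁ = 1) :
    (map f₀ g₀ + map f₀ g₁ + map f₁ g₀ - map f₁ g₁) *
        (map f₀ g₀ + map f₀ g₁ + map f₁ g₀ - map f₁ g₁)
      = 4 - map (f₀ * f₁ - f₁ * f₀) (g₀ * g₁ - g₁ * g₀) := by
  have rTensor_sq {f : Module.End R M} (hf : f * f = 1) : f.rTensor N * f.rTensor N = 1 := by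
    rw [← LinearMap.rTensor_mul, hf]
    exact LinearMap.rTensor_id _ _
  have lTensor_sq {g : Module.End R N} (hg : g * g = 1) : g.lTensor M * g.lTensor M = 1 := by
    rw [← LinearMap.lTensor_mul, hg]
    exact LinearMap.lTensor_id _ _
  simp only [map_eq_rTensor_mul_lTensor, LinearMap.rTensor_sub, LinearMap.rTensor_mul,
    LinearMap.lTensor_sub, LinearMap.lTensor_mul]
  exact chsh_mul_self_of_commute (rTensor_sq hf₀) (rTensor_sq hf₁) (lTensor_sq hg₀)
    (lTensor_sq hg₁) (commute_rTensor_lTensor _ _) (commute_rTensor_lTensor _ _)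
    (commute_rTensor_lTensor _ _) (commute_rTensor_lTensor _ _)

end TensorProduct

theorem chsh_square_identity_general
    {HA HB : Type*}
    [NormedAddCommGroup HA] [InnerProductSpace ℂ HA]
    [NormedAddCommGroup HB] [InnerProductSpace ℂ HB]
    (A₀ A₁ : HA →L[ℂ] HA) (B₀ B₁ : HB →L[ℂ] HB)
    (hA₀sq : A₀ * A₀ = 1) (hA₁sq : A₁ * A₁ = 1)
    (hB₀sq : B₀ * B₀ = 1) (hB₁sq : B₁ * B₁ = 1)
    (𝓑 : HA ⊗[ℂ] HB →ₗ[ℂ] HA ⊗[ℂ] HB)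
    (h𝓑 : 𝓑 = TensorProduct.map (A₀ : HA →ₗ[ℂ] HA) (B₀ : HB →ₗ[ℂ] HB)
            + TensorProduct.map (A₀ : HA →ₗ[ℂ] HA) (B₁ : HB →ₗ[ℂ] HB)
            + TensorProduct.map (A₁ : HA →ₗ[ℂ] HA) (B₀ : HB →ₗ[ℂ] HB)
            - TensorProduct.map (A₁ : HA →ₗ[ℂ] HA) (B₁ : HB →ₗ[ℂ] HB)) :
    𝓑 * 𝓑 = (4 : ℂ) • (1 : HA ⊗[ℂ] HB →ₗ[ℂ] HA ⊗[ℂ] HB)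
      - TensorProduct.map
          ((A₀ * A₁ - A₁ * A₀ : HA →L[ℂ] HA) : HA →ₗ[ℂ] HA)
          ((B₀ * B₁ - B₁ * B₀ : HB →L[ℂ] HB) : HB →ₗ[ℂ] HB) := by
  rw [h𝓑, ofNat_smul_eq_nsmul ℂ, nsmul_one, Nat.cast_ofNat]
  exact TensorProduct.chsh_mul_self
    (congrArg ContinuousLinearMap.toLinearMap hA₀sq) (congrArg ContinuousLinearMap.toLinearMap hA₁sq)
    (congrArg ContinuousLinearMap.toLinearMap hB₀sq) (congrArg ContinuousLinearMap.toLinearMap hB₁sq)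

/-- Khalfin–Tsirelson–Landau identity: if `A₀, A₁, B₀, B₁` are self-adjoint
operators squaring to the identity, then the CHSH operator
`𝓑 = A₀⊗B₀ + A₀⊗B₁ + A₁⊗B₀ − A₁⊗B₁` satisfies
`𝓑² = 4·𝟙 − [A₀,A₁]⊗[B₀,B₁]`. -/
theorem chsh_square_identity
    {HA HB : Type*}
    [NormedAddCommGroup HA] [InnerProductSpace ℂ HA] [CompleteSpace HA]
    [NormedAddCommGroup HB] [InnerProductSpace ℂ HB] [CompleteSpace HB]
    (A₀ A₁ : HA →L[ℂ] HA) (B₀ B₁ : HB →L[ℂ] HB)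
    (hA₀ : IsSelfAdjoint A₀) (hA₁ : IsSelfAdjoint A₁)
    (hB₀ : IsSelfAdjoint B₀) (hB₁ : IsSelfAdjoint B₁)
    (hA₀sq : A₀ * A₀ = 1) (hA₁sq : A₁ * A₁ = 1)
    (hB₀sq : B₀ * B₀ = 1) (hB₁sq : B₁ * B₁ = 1)
    (𝓑 : HA ⊗[ℂ] HB →ₗ[ℂ] HA ⊗[ℂ] HB)
    (h𝓑 : 𝓑 = TensorProduct.map (A₀ : HA →ₗ[ℂ] HA) (B₀ : HB →ₗ[ℂ] HB)
            + TensorProduct.map (A₀ : HA →ₗ[ℂ] HA) (B₁ : HB →ₗ[ℂ] HB)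
            + TensorProduct.map (A₁ : HA →ₗ[ℂ] HA) (B₀ : HB →ₗ[ℂ] HB)
            - TensorProduct.map (A₁ : HA →ₗ[ℂ] HA) (B₁ : HB →ₗ[ℂ] HB)) :
    𝓑 * 𝓑 = (4 : ℂ) • (1 : HA ⊗[ℂ] HB →ₗ[ℂ] HA ⊗[ℂ] HB)
      - TensorProduct.map
          ((A₀ * A₁ - A₁ * A₀ : HA →L[ℂ] HA) : HA →ₗ[ℂ] HA)
          ((B₀ * B₁ - B₁ * B₀ : HB →L[ℂ] HB) : HB →ₗ[ℂ] HB) :=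
  chsh_square_identity_general A₀ A₁ B₀ B₁ hA₀sq hA₁sq hB₀sq hB₁sq 𝓑 h𝓑
end

section
/- If A₀, A₁, B₀, B₁ are self-adjoint involutions on Hilbert spaces H_A, H_B, then the operator norm of the CHSH operator 𝓑 = A₀⊗B₀ + A₀⊗B₁ + A₁⊗B₀ − A₁⊗B₁ satisfies ‖𝓑‖ ≤ 2√2 (Tsirelson's bound). -/
/-!
For commuting involutions the square of the CHSH operator is `4 - [A₀, A₁][B₀, B₁]`, and each
commutator of two self-adjoint involutions has norm at most `2`, so `‖𝓑 * 𝓑‖ ≤ 8`. As `𝓑` is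
self-adjoint, the C⋆-identity gives `‖𝓑‖ ^ 2 = ‖𝓑 * 𝓑‖`.
-/

def chsh {R : Type*} [Ring R] (a₀ a₁ b₀ b₁ : R) : R :=
  a₀ * b₀ + a₀ * b₁ + a₁ * b₀ - a₁ * b₁

section Ring

variable {R : Type*} [Ring R] {a₀ a₁ b₀ b₁ : R}

theorem chsh_mul_self (ha₀ : a₀ * a₀ = 1) (ha₁ : a₁ * a₁ = 1) (hb₀ : b₀ * b₀ = 1)
    (hb₁ : b₁ * b₁ = 1) (h₀₀ : Commute a₀ b₀) (h₀₁ : Commute a₀ b₁) (h₁₀ : Commute a₁ b₀)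
    (h₁₁ : Commute a₁ b₁) :
    chsh a₀ a₁ b₀ b₁ * chsh a₀ a₁ b₀ b₁ = 4 • 1 - ⁅a₀, a₁⁆ * ⁅b₀, b₁⁆ := by
  have cancel {x : R} (hx : x * x = 1) (y : R) : x * (x * y) = y := by
    rw [← mul_assoc, hx, one_mul]
  -- Move every `aᵢ` to the left of every `bⱼ`, then cancel the squares.
  simp only [chsh, Ring.lie_def, mul_add, add_mul, mul_sub, sub_mul, mul_assoc,
    h₀₀.symm.left_comm, h₀₁.symm.left_comm, h₁₀.symm.left_comm, h₁₁.symm.left_comm,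
    cancel ha₀, cancel ha₁, ha₀, ha₁, hb₀, hb₁, mul_one]
  abel

theorem IsSelfAdjoint.chsh [StarRing R] (ha₀ : IsSelfAdjoint a₀) (ha₁ : IsSelfAdjoint a₁)
    (hb₀ : IsSelfAdjoint b₀) (hb₁ : IsSelfAdjoint b₁) (h₀₀ : Commute a₀ b₀)
    (h₀₁ : Commute a₀ b₁) (h₁₀ : Commute a₁ b₀) (h₁₁ : Commute a₁ b₁) :
    IsSelfAdjoint (chsh a₀ a₁ b₀ b₁) :=
  ((((ha₀.commute_iff hb₀).mp h₀₀).add ((ha₀.commute_iff hb₁).mp h₀₁)).add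
    ((ha₁.commute_iff hb₀).mp h₁₀)).sub ((ha₁.commute_iff hb₁).mp h₁₁)

end Ring

theorem norm_lie_le {R : Type*} [NonUnitalSeminormedRing R] (x y : R) :
    ‖⁅x, y⁆‖ ≤ 2 * ‖x‖ * ‖y‖ :=
  calc ‖⁅x, y⁆‖ ≤ ‖x * y‖ + ‖y * x‖ := by rw [Ring.lie_def]; exact norm_sub_le _ _
    _ ≤ ‖x‖ * ‖y‖ + ‖y‖ * ‖x‖ := add_le_add (norm_mul_le x y) (norm_mul_le y x)
    _ = 2 * ‖x‖ * ‖y‖ := by ring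

section CStarRing

variable {R : Type*} [NormedRing R] [StarRing R] [CStarRing R]

theorem CStarRing.norm_one_le : ‖(1 : R)‖ ≤ 1 := by
  have h : ‖(1 : R)‖ = ‖(1 : R)‖ ^ 2 := by
    simpa using (IsSelfAdjoint.one R).norm_mul_self
  nlinarith [norm_nonneg (1 : R)]

theorem IsSelfAdjoint.norm_le_one_of_mul_self_eq_one {x : R} (hx : IsSelfAdjoint x)
    (hxx : x * x = 1) : ‖x‖ ≤ 1 := by
  have h : ‖x‖ ^ 2 ≤ 1 ^ 2 := by
    rw [← hx.norm_mul_self, hxx, one_pow]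
    exact CStarRing.norm_one_le
  exact (pow_le_pow_iff_left₀ (norm_nonneg x) zero_le_one two_ne_zero).mp h

theorem norm_lie_le_two_of_mul_self_eq_one {x y : R} (hx : IsSelfAdjoint x)
    (hy : IsSelfAdjoint y) (hxx : x * x = 1) (hyy : y * y = 1) : ‖⁅x, y⁆‖ ≤ 2 := by
  have hx₁ := hx.norm_le_one_of_mul_self_eq_one hxx
  have hy₁ := hy.norm_le_one_of_mul_self_eq_one hyy
  calc ‖⁅x, y⁆‖ ≤ 2 * ‖x‖ * ‖y‖ := norm_lie_le x y
    _ ≤ 2 * 1 * 1 := by gcongr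
    _ = 2 := by norm_num

theorem norm_chsh_mul_self_le {a₀ a₁ b₀ b₁ : R} (ha₀ : IsSelfAdjoint a₀)
    (ha₁ : IsSelfAdjoint a₁) (hb₀ : IsSelfAdjoint b₀) (hb₁ : IsSelfAdjoint b₁)
    (ha₀₀ : a₀ * a₀ = 1) (ha₁₁ : a₁ * a₁ = 1) (hb₀₀ : b₀ * b₀ = 1) (hb₁₁ : b₁ * b₁ = 1)
    (h₀₀ : Commute a₀ b₀) (h₀₁ : Commute a₀ b₁) (h₁₀ : Commute a₁ b₀) (h₁₁ : Commute a₁ b₁) :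
    ‖chsh a₀ a₁ b₀ b₁ * chsh a₀ a₁ b₀ b₁‖ ≤ 8 := by
  have hA := norm_lie_le_two_of_mul_self_eq_one ha₀ ha₁ ha₀₀ ha₁₁
  have hB := norm_lie_le_two_of_mul_self_eq_one hb₀ hb₁ hb₀₀ hb₁₁
  have hone : ‖(4 • 1 : R)‖ ≤ 4 :=
    norm_nsmul_le.trans (by push_cast; linarith [CStarRing.norm_one_le (R := R)])
  rw [chsh_mul_self ha₀₀ ha₁₁ hb₀₀ hb₁₁ h₀₀ h₀₁ h₁₀ h₁₁]
  calc ‖4 • 1 - ⁅a₀, a₁⁆ * ⁅b₀, b₁⁆‖ ≤ ‖(4 • 1 : R)‖ + ‖⁅a₀, a₁⁆‖ * ‖⁅b₀, b₁⁆‖ :=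
        (norm_sub_le _ _).trans (add_le_add_right (norm_mul_le _ _) _)
    _ ≤ 4 + 2 * 2 := by gcongr
    _ = 8 := by norm_num

end CStarRing

/-- Tsirelson's bound: for self-adjoint involutions `A₀, A₁` on `H_A` and `B₀, B₁` on
`H_B` (represented as commuting operators on the joint Hilbert space, `A_i ⊗ B_j`
corresponding to the product `A_i * B_j`), the CHSH operator
`𝓑 = A₀⊗B₀ + A₀⊗B₁ + A₁⊗B₀ − A₁⊗B₁` satisfies `‖𝓑‖ ≤ 2√2`. -/
theorem tsirelson_bound
    {H : Type*} [NormedAddCommGroup H] [InnerProductSpace ℂ H] [CompleteSpace H]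
    (A₀ A₁ B₀ B₁ : H →L[ℂ] H)
    (hA₀ : IsSelfAdjoint A₀) (hA₁ : IsSelfAdjoint A₁)
    (hB₀ : IsSelfAdjoint B₀) (hB₁ : IsSelfAdjoint B₁)
    (hA₀sq : A₀ * A₀ = 1) (hA₁sq : A₁ * A₁ = 1)
    (hB₀sq : B₀ * B₀ = 1) (hB₁sq : B₁ * B₁ = 1)
    (hc₀₀ : Commute A₀ B₀) (hc₀₁ : Commute A₀ B₁)
    (hc₁₀ : Commute A₁ B₀) (hc₁₁ : Commute A₁ B₁) :
    ‖A₀ * B₀ + A₀ * B₁ + A₁ * B₀ - A₁ * B₁‖ ≤ 2 * Real.sqrt 2 := by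
  have hsa := IsSelfAdjoint.chsh hA₀ hA₁ hB₀ hB₁ hc₀₀ hc₀₁ hc₁₀ hc₁₁
  have hsq : ‖chsh A₀ A₁ B₀ B₁‖ ^ 2 ≤ (2 * Real.sqrt 2) ^ 2 := by
    rw [← hsa.norm_mul_self, mul_pow, Real.sq_sqrt zero_le_two]
    linarith [norm_chsh_mul_self_le hA₀ hA₁ hB₀ hB₁ hA₀sq hA₁sq hB₀sq hB₁sq
      hc₀₀ hc₀₁ hc₁₀ hc₁₁]
  exact (pow_le_pow_iff_left₀ (norm_nonneg _) (by positivity) two_ne_zero).mp hsq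
end

section
/- Let |ψ⟩ be a unit vector in H_A ⊗ H_B and A₀, A₁, B₀, B₁ self-adjoint involutions. If ⟨ψ| A₀⊗B₀ |ψ⟩ = 1, then |⟨ψ| 𝓑 |ψ⟩| ≤ 5/2, where 𝓑 = A₀⊗B₀ + A₀⊗B₁ + A₁⊗B₀ − A₁⊗B₁. -/
open scoped InnerProductSpace

/-! Perfect correlation forces `B₀ ψ = A₀ ψ`, so with the unit vectors `a = A₁ ψ`, `b = B₀ ψ`,
`c = B₁ ψ` the Bell value is `1 + ⟪b, c⟫ + ⟪a, b - c⟫`, a real number because the Bell operator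
is self-adjoint. Writing `t = ‖b - c‖`, the first two terms equal `2 - t² / 2` and the last has
absolute value at most `t`; hence the value lies between `2 - t - t² / 2 ≥ -2` (as `t ≤ 2`) and
`2 + t - t² / 2 ≤ 5 / 2`. -/

open RCLike in
lemma abs_one_add_re_inner_add_re_inner_sub_le {𝕜 E : Type*} [RCLike 𝕜] [NormedAddCommGroup E]
    [InnerProductSpace 𝕜 E] {a b c : E} (ha : ‖a‖ = 1) (hb : ‖b‖ = 1) (hc : ‖c‖ = 1) :
    |1 + re ⟪b, c⟫_𝕜 + re ⟪a, b - c⟫_𝕜| ≤ 5 / 2 := by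
  have hdist : ‖b - c‖ ^ 2 = 2 - 2 * re ⟪b, c⟫_𝕜 := by
    rw [@norm_sub_sq 𝕜, hb, hc]
    ring
  have hdist_le : ‖b - c‖ ≤ 2 := (norm_sub_le b c).trans (by rw [hb, hc]; norm_num)
  have hproj : |re ⟪a, b - c⟫_𝕜| ≤ ‖b - c‖ :=
    (abs_re_le_norm _).trans ((norm_inner_le_norm a (b - c)).trans (by rw [ha, one_mul]))
  rw [abs_le] at hproj ⊢
  constructor <;> nlinarith [sq_nonneg (‖b - c‖ - 1), norm_nonneg (b - c)]

lemma IsSelfAdjoint.mem_unitary_of_mul_self_eq_one {R : Type*} [Monoid R] [StarMul R] {U : R}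
    (hU : IsSelfAdjoint U) (h : U * U = 1) : U ∈ unitary R :=
  Unitary.mem_iff.mpr ⟨by rw [hU.star_eq, h], by rw [hU.star_eq, h]⟩

lemma Commute.mul_mul_self_eq_one {R : Type*} [Monoid R] {a b : R} (hab : Commute a b)
    (ha : a * a = 1) (hb : b * b = 1) : a * b * (a * b) = 1 := by
  rw [hab.symm.mul_mul_mul_comm, ha, hb, one_mul]

section SelfAdjoint

variable {𝕜 H : Type*} [RCLike 𝕜] [NormedAddCommGroup H] [InnerProductSpace 𝕜 H] [CompleteSpace H]

lemma ContinuousLinearMap.apply_eq_self_of_inner_apply_eq_one {U : H →L[𝕜] H}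
    (hU : U ∈ unitary (H →L[𝕜] H)) {x : H} (hx : ‖x‖ = 1) (h : ⟪x, U x⟫_𝕜 = 1) : U x = x :=
  ((inner_eq_one_iff_of_norm_eq_one hx
    (by rw [ContinuousLinearMap.norm_map_of_mem_unitary hU, hx])).mp h).symm

lemma IsSelfAdjoint.inner_mul_apply {A : H →L[𝕜] H} (hA : IsSelfAdjoint A) (B : H →L[𝕜] H)
    (x : H) : ⟪x, (A * B) x⟫_𝕜 = ⟪A x, B x⟫_𝕜 :=
  (hA.isSymmetric x (B x)).symm

lemma IsSelfAdjoint.ofReal_re_inner_apply {A : H →L[𝕜] H} (hA : IsSelfAdjoint A) (x : H) :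
    (RCLike.re ⟪x, A x⟫_𝕜 : 𝕜) = ⟪x, A x⟫_𝕜 :=
  hA.isSymmetric.coe_re_inner_self_apply x

end SelfAdjoint

/-- If `⟨ψ| A₀⊗B₀ |ψ⟩ = 1` for a unit vector `ψ` and self-adjoint involutions
`A₀, A₁, B₀, B₁` (represented as commuting operators on the joint Hilbert space,
`A_i ⊗ B_j` corresponding to `A_i * B_j`), then `|⟨ψ| 𝓑 |ψ⟩| ≤ 5/2`. -/
theorem chsh_bound_of_perfect_correlation
    {H : Type*} [NormedAddCommGroup H] [InnerProductSpace ℂ H] [CompleteSpace H]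
    (A₀ A₁ B₀ B₁ : H →L[ℂ] H)
    (hA₀ : IsSelfAdjoint A₀) (hA₁ : IsSelfAdjoint A₁)
    (hB₀ : IsSelfAdjoint B₀) (hB₁ : IsSelfAdjoint B₁)
    (hA₀sq : A₀ * A₀ = 1) (hA₁sq : A₁ * A₁ = 1)
    (hB₀sq : B₀ * B₀ = 1) (hB₁sq : B₁ * B₁ = 1)
    (hc₀₀ : Commute A₀ B₀) (hc₀₁ : Commute A₀ B₁)
    (hc₁₀ : Commute A₁ B₀) (hc₁₁ : Commute A₁ B₁)
    (ψ : H) (hψ : ‖ψ‖ = 1)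
    (hcorr : ⟪ψ, (A₀ * B₀) ψ⟫_ℂ = 1) :
    ‖⟪ψ, (A₀ * B₀ + A₀ * B₁ + A₁ * B₀ - A₁ * B₁) ψ⟫_ℂ‖ ≤ 5 / 2 := by
  have hnorm {U : H →L[ℂ] H} (hU : IsSelfAdjoint U) (hUsq : U * U = 1) : ‖U ψ‖ = 1 := by
    rw [ContinuousLinearMap.norm_map_of_mem_unitary (hU.mem_unitary_of_mul_self_eq_one hUsq), hψ]
  have hA₀B₀ : IsSelfAdjoint (A₀ * B₀) := (hA₀.commute_iff hB₀).mp hc₀₀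
  have hfix : (A₀ * B₀) ψ = ψ :=
    ContinuousLinearMap.apply_eq_self_of_inner_apply_eq_one
      (hA₀B₀.mem_unitary_of_mul_self_eq_one (hc₀₀.mul_mul_self_eq_one hA₀sq hB₀sq)) hψ hcorr
  have hB₀ψ : B₀ ψ = A₀ ψ := by
    conv_rhs => rw [← hfix, ← mul_apply_eq_comp, ← mul_assoc, hA₀sq, one_mul]
  have hbell : IsSelfAdjoint (A₀ * B₀ + A₀ * B₁ + A₁ * B₀ - A₁ * B₁) :=
    ((hA₀B₀.add ((hA₀.commute_iff hB₁).mp hc₀₁)).add ((hA₁.commute_iff hB₀).mp hc₁₀)).sub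
      ((hA₁.commute_iff hB₁).mp hc₁₁)
  have hexpand : ⟪ψ, (A₀ * B₀ + A₀ * B₁ + A₁ * B₀ - A₁ * B₁) ψ⟫_ℂ
      = 1 + ⟪B₀ ψ, B₁ ψ⟫_ℂ + ⟪A₁ ψ, B₀ ψ - B₁ ψ⟫_ℂ := by
    rw [sub_apply, add_apply, add_apply, inner_sub_right, inner_add_right, inner_add_right, hcorr,
      hA₀.inner_mul_apply, hA₁.inner_mul_apply, hA₁.inner_mul_apply, ← hB₀ψ, inner_sub_right]
    ring
  rw [← hbell.ofReal_re_inner_apply, RCLike.norm_ofReal]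
  simpa only [hexpand, map_add, map_sub, RCLike.one_re] using
    abs_one_add_re_inner_add_re_inner_sub_le (hnorm hA₁ hA₁sq) (hnorm hB₀ hB₀sq) (hnorm hB₁ hB₁sq)
end

section
/- For unit vectors a₀, a₁, b₀, b₁ in a complex Hilbert space with a₀ = b₀ and ⟨b₀,b₁⟩ real, one has |1 + ⟨b₀,b₁⟩ + ⟨a₁,b₀⟩ − ⟨a₁,b₁⟩| ≤ |1 + ⟨b₀,b₁⟩| + √2·√(1 − ⟨b₀,b₁⟩) ≤ 5/2. -/
open scoped InnerProductSpace

theorem norm_sub_eq_sqrt_two_mul_sqrt_one_sub_re_inner {𝕜 E : Type*} [RCLike 𝕜]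
    [NormedAddCommGroup E] [InnerProductSpace 𝕜 E] {x y : E} (hx : ‖x‖ = 1) (hy : ‖y‖ = 1) :
    ‖x - y‖ = Real.sqrt 2 * Real.sqrt (1 - RCLike.re ⟪x, y⟫_𝕜) := by
  have hsq : ‖x - y‖ ^ 2 = 2 * (1 - RCLike.re ⟪x, y⟫_𝕜) := by
    rw [@norm_sub_sq 𝕜, hx, hy]
    ring
  rw [← Real.sqrt_mul zero_le_two, ← hsq, Real.sqrt_sq (norm_nonneg _)]

theorem abs_one_add_add_sqrt_two_mul_sqrt_one_sub_le {t : ℝ} (ht₀ : -1 ≤ t) (ht₁ : t ≤ 1) :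
    |1 + t| + Real.sqrt 2 * Real.sqrt (1 - t) ≤ 5 / 2 := by
  rw [abs_of_nonneg (by linarith)]
  have hs : Real.sqrt (1 - t) ^ 2 = 1 - t := Real.sq_sqrt (by linarith)
  have h2 : Real.sqrt 2 ^ 2 = 2 := Real.sq_sqrt zero_le_two
  -- with `s = √(1 - t)` the left side is `2 - s² + √2 s`, maximal at `s = √2 / 2`
  nlinarith [sq_nonneg (Real.sqrt (1 - t) - Real.sqrt 2 / 2)]

theorem chsh_vector_bound_general
    {H : Type*} [NormedAddCommGroup H] [InnerProductSpace ℂ H]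
    (a₁ b₀ b₁ : H)
    (ha₁ : ‖a₁‖ = 1) (hb₀ : ‖b₀‖ = 1) (hb₁ : ‖b₁‖ = 1)
    (hreal : (⟪b₀, b₁⟫_ℂ).im = 0) :
    ‖1 + ⟪b₀, b₁⟫_ℂ + ⟪a₁, b₀⟫_ℂ - ⟪a₁, b₁⟫_ℂ‖
        ≤ |1 + (⟪b₀, b₁⟫_ℂ).re| + Real.sqrt 2 * Real.sqrt (1 - (⟪b₀, b₁⟫_ℂ).re)
      ∧ |1 + (⟪b₀, b₁⟫_ℂ).re| + Real.sqrt 2 * Real.sqrt (1 - (⟪b₀, b₁⟫_ℂ).re) ≤ 5 / 2 := by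
  have hre : |(⟪b₀, b₁⟫_ℂ).re| ≤ 1 :=
    (Complex.abs_re_le_norm _).trans <| (norm_inner_le_norm b₀ b₁).trans_eq (by simp [hb₀, hb₁])
  refine ⟨?_, abs_one_add_add_sqrt_two_mul_sqrt_one_sub_le (abs_le.1 hre).1 (abs_le.1 hre).2⟩
  have h_norm_one_add : |1 + (⟪b₀, b₁⟫_ℂ).re| = ‖1 + ⟪b₀, b₁⟫_ℂ‖ := by
    simpa using (Complex.abs_re_eq_norm (z := 1 + ⟪b₀, b₁⟫_ℂ)).2 (by simpa using hreal)
  calc ‖1 + ⟪b₀, b₁⟫_ℂ + ⟪a₁, b₀⟫_ℂ - ⟪a₁, b₁⟫_ℂ‖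
      = ‖(1 + ⟪b₀, b₁⟫_ℂ) + ⟪a₁, b₀ - b₁⟫_ℂ‖ := by rw [inner_sub_right, add_sub_assoc]
    _ ≤ ‖1 + ⟪b₀, b₁⟫_ℂ‖ + ‖a₁‖ * ‖b₀ - b₁‖ := norm_add_le_of_le le_rfl (norm_inner_le_norm _ _)
    _ = |1 + (⟪b₀, b₁⟫_ℂ).re| + Real.sqrt 2 * Real.sqrt (1 - (⟪b₀, b₁⟫_ℂ).re) := by
      rw [← h_norm_one_add, ha₁, one_mul,
        norm_sub_eq_sqrt_two_mul_sqrt_one_sub_re_inner (𝕜 := ℂ) hb₀ hb₁, RCLike.re_to_complex]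

/-- For unit vectors `a₀, a₁, b₀, b₁` in a complex Hilbert space with `a₀ = b₀` and
`⟨b₀,b₁⟩` real, `|1 + ⟨b₀,b₁⟩ + ⟨a₁,b₀⟩ − ⟨a₁,b₁⟩| ≤ |1 + ⟨b₀,b₁⟩| + √2·√(1 − ⟨b₀,b₁⟩) ≤ 5/2`. -/
theorem chsh_vector_bound
    {H : Type*} [NormedAddCommGroup H] [InnerProductSpace ℂ H]
    (a₀ a₁ b₀ b₁ : H)
    (ha₀ : ‖a₀‖ = 1) (ha₁ : ‖a₁‖ = 1) (hb₀ : ‖b₀‖ = 1) (hb₁ : ‖b₁‖ = 1)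
    (hab : a₀ = b₀) (hreal : (⟪b₀, b₁⟫_ℂ).im = 0) :
    ‖1 + ⟪b₀, b₁⟫_ℂ + ⟪a₁, b₀⟫_ℂ - ⟪a₁, b₁⟫_ℂ‖
        ≤ |1 + (⟪b₀, b₁⟫_ℂ).re| + Real.sqrt 2 * Real.sqrt (1 - (⟪b₀, b₁⟫_ℂ).re)
      ∧ |1 + (⟪b₀, b₁⟫_ℂ).re| + Real.sqrt 2 * Real.sqrt (1 - (⟪b₀, b₁⟫_ℂ).re) ≤ 5 / 2 :=
  chsh_vector_bound_general a₁ b₀ b₁ ha₁ hb₀ hb₁ hreal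
end

section
/- With Q, D, v, Π as above (Q² = 𝟙 self-adjoint, D = 2|v⟩⟨v| − 𝟙, Π projection onto span{v, Qv}), the commutator satisfies [Q, D] = [ΠQΠ, ΠDΠ]. -/
open scoped InnerProductSpace
open InnerProductSpace ContinuousLinearMap

/-!
Write `D = 2|v⟩⟨v| - 1`. Then `[Q, D] = 2 [Q, |v⟩⟨v|]`, and since `Π |v⟩⟨v| Π = |v⟩⟨v|` we get
`ΠDΠ = 2|v⟩⟨v| - Π`; as `Π` absorbs `ΠQΠ` on both sides, `[ΠQΠ, ΠDΠ] = 2 [ΠQΠ, |v⟩⟨v|]`.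
Finally `[A, |v⟩⟨v|] = |Av⟩⟨v| - |v⟩⟨A†v|`, and for `A = ΠQΠ` the self-adjoint `Π` fixes both
`v` and `Qv = Q†v`, so these rank-one operators are those of `A = Q`.
-/

theorem commutator_smul_sub_of_mul_eq {R S : Type*} [Ring R] [Monoid S] [DistribMulAction S R]
    [SMulCommClass S R R] [IsScalarTower S R R] {X P : R} (c : S) (Y : R)
    (hXP : X * P = X) (hPX : P * X = X) :
    X * (c • Y - P) - (c • Y - P) * X = c • (X * Y - Y * X) := by
  rw [mul_sub, sub_mul, hXP, hPX, mul_smul_comm, smul_mul_assoc, smul_sub]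
  abel

section

variable {𝕜 H : Type*} [RCLike 𝕜] [NormedAddCommGroup H] [InnerProductSpace 𝕜 H]
  [CompleteSpace H]

theorem mul_rankOne_self_mul_of_isSelfAdjoint {P : H →L[𝕜] H} (hP : IsSelfAdjoint P) {v : H}
    (hPv : P v = v) : P * rankOne 𝕜 v v * P = rankOne 𝕜 v v := by
  simp only [mul_def, comp_rankOne, rankOne_comp, hP.adjoint_eq, hPv]

theorem commutator_rankOne_self_compression {P A : H →L[𝕜] H} (hP : IsSelfAdjoint P) {v : H}
    (hPv : P v = v) (hPAv : P (A v) = A v) (hPAadjv : P (adjoint A v) = adjoint A v) :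
    P * A * P * rankOne 𝕜 v v - rankOne 𝕜 v v * (P * A * P) =
      A * rankOne 𝕜 v v - rankOne 𝕜 v v * A := by
  simp only [mul_def, comp_rankOne, rankOne_comp, adjoint_comp, hP.adjoint_eq, comp_apply, hPv,
    hPAv, hPAadjv]

end

theorem commutator_restriction_general
    {H : Type*} [NormedAddCommGroup H] [InnerProductSpace ℂ H] [CompleteSpace H]
    (Q D Pi : H →L[ℂ] H) (v : H)
    (hQ : IsSelfAdjoint Q)
    (hD : ∀ x, D x = (2 : ℂ) • (⟪v, x⟫_ℂ • v) - x)
    (hPisa : IsSelfAdjoint Pi) (hPiidem : Pi * Pi = Pi)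
    (hPirange : LinearMap.range (Pi : H →ₗ[ℂ] H) = Submodule.span ℂ {v, Q v}) :
    Q * D - D * Q = (Pi * Q * Pi) * (Pi * D * Pi) - (Pi * D * Pi) * (Pi * Q * Pi) := by
  have hfix : ∀ w ∈ Submodule.span ℂ {v, Q v}, Pi w = w := fun w hw =>
    (LinearMap.IsIdempotentElem.mem_range_iff (IsIdempotentElem.toLinearMap hPiidem)).mp
      (hPirange ▸ hw)
  have hPiv : Pi v = v := hfix v (Submodule.subset_span (by simp))
  have hPiQv : Pi (Q v) = Q v := hfix (Q v) (Submodule.subset_span (by simp))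
  have hDrankOne : D = (2 : ℂ) • rankOne ℂ v v - 1 := by ext x; simp [hD]
  have hPiDPi : Pi * D * Pi = (2 : ℂ) • rankOne ℂ v v - Pi := by
    rw [hDrankOne, mul_sub, sub_mul, mul_smul_comm, smul_mul_assoc,
      mul_rankOne_self_mul_of_isSelfAdjoint hPisa hPiv, mul_one, hPiidem]
  have hright : Pi * Q * Pi * Pi = Pi * Q * Pi := by rw [mul_assoc, hPiidem]
  have hleft : Pi * (Pi * Q * Pi) = Pi * Q * Pi := by simp only [← mul_assoc, hPiidem]
  calc Q * D - D * Q = (2 : ℂ) • (Q * rankOne ℂ v v - rankOne ℂ v v * Q) := by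
        rw [hDrankOne]; exact commutator_smul_sub_of_mul_eq _ _ (mul_one Q) (one_mul Q)
    _ = (2 : ℂ) • (Pi * Q * Pi * rankOne ℂ v v - rankOne ℂ v v * (Pi * Q * Pi)) := by
        rw [commutator_rankOne_self_compression hPisa hPiv hPiQv (by rwa [hQ.adjoint_eq])]
    _ = _ := by rw [hPiDPi, commutator_smul_sub_of_mul_eq _ _ hright hleft]

/-- With `Q` a self-adjoint involution, `v` a unit vector, `D = 2|v⟩⟨v| − 𝟙` and `Pi`
the orthogonal projection onto `span{v, Qv}`, the commutator satisfies
`[Q, D] = [PiQPi, PiDPi]`. -/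
theorem commutator_restriction
    {H : Type*} [NormedAddCommGroup H] [InnerProductSpace ℂ H] [CompleteSpace H]
    (Q D Pi : H →L[ℂ] H) (v : H) (hv : ‖v‖ = 1)
    (hQ : IsSelfAdjoint Q) (hQsq : Q * Q = 1)
    (hD : ∀ x, D x = (2 : ℂ) • (⟪v, x⟫_ℂ • v) - x)
    (hPisa : IsSelfAdjoint Pi) (hPiidem : Pi * Pi = Pi)
    (hPirange : LinearMap.range (Pi : H →ₗ[ℂ] H) = Submodule.span ℂ {v, Q v}) :
    Q * D - D * Q = (Pi * Q * Pi) * (Pi * D * Pi) - (Pi * D * Pi) * (Pi * Q * Pi) :=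
  commutator_restriction_general Q D Pi v hQ hD hPisa hPiidem hPirange
end

section
/- For θ ∈ (0, π), let Q_R = cos θ·σ_z + sin θ·σ_x and D_R = −σ_z be 2×2 Hermitian matrices, and 𝓑 = Q_R⊗Q_R + Q_R⊗D_R + D_R⊗Q_R − D_R⊗D_R. Then ‖𝓑‖ = 2√(1 + sin²θ). -/
open Matrix Complex
open scoped Kronecker

/-!
For involutions `Q`, `D`, Landau's identity gives `𝓑² = 4 - [Q, D] ⊗ [Q, D]`. Here
`[Q_R, D_R] = 2 sin θ · σ_z σ_x`, so `𝓑² = 4 - 4 sin² θ · K` with `K = σ_z σ_x ⊗ σ_z σ_x` a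
self-adjoint unitary having `e₀₀ - e₁₁` as a `-1`-eigenvector; hence `‖𝓑²‖ = 4 + 4 sin² θ`.
Since `𝓑` is self-adjoint, the C⋆-identity gives `‖𝓑‖² = ‖𝓑²‖`.
-/

namespace Matrix

variable {l m n p α : Type*}

theorem sub_kronecker [NonUnitalNonAssocRing α] (A₁ A₂ : Matrix l m α) (B : Matrix n p α) :
    (A₁ - A₂) ⊗ₖ B = A₁ ⊗ₖ B - A₂ ⊗ₖ B := by
  ext
  simp [sub_mul]

theorem kronecker_sub [NonUnitalNonAssocRing α] (A : Matrix l m α) (B₁ B₂ : Matrix n p α) :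
    A ⊗ₖ (B₁ - B₂) = A ⊗ₖ B₁ - A ⊗ₖ B₂ := by
  ext
  simp [mul_sub]

theorem neg_kronecker_neg [Mul α] [HasDistribNeg α] (A : Matrix l m α) (B : Matrix n p α) :
    (-A) ⊗ₖ (-B) = A ⊗ₖ B := by
  ext
  simp

theorem IsHermitian.kronecker [CommMagma α] [StarMul α] {A : Matrix m m α} {B : Matrix n n α}
    (hA : A.IsHermitian) (hB : B.IsHermitian) : (A ⊗ₖ B).IsHermitian := by
  rw [IsHermitian, conjTranspose_kronecker, hA.eq, hB.eq]

end Matrix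

theorem IsSelfAdjoint.norm_eq_one_of_mul_self_eq_one {A : Type*} [NormedRing A] [StarRing A]
    [CStarRing A] [Nontrivial A] {x : A} (hx : IsSelfAdjoint x) (h : x * x = 1) : ‖x‖ = 1 :=
  CStarRing.norm_of_mem_unitary <|
    Unitary.mem_iff.mpr ⟨by rw [hx.star_eq, h], by rw [hx.star_eq, h]⟩

theorem ContinuousLinearMap.norm_smul_one_sub_smul_of_apply_eq_neg {𝕜 E : Type*} [RCLike 𝕜]
    [NormedAddCommGroup E] [NormedSpace 𝕜 E] {S : E →L[𝕜] E} (hS : ‖S‖ ≤ 1) {v : E}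
    (hv : v ≠ 0) (hSv : S v = -v) {a c : ℝ} (ha : 0 ≤ a) (hc : 0 ≤ c) :
    ‖(a : 𝕜) • (1 : E →L[𝕜] E) - (c : 𝕜) • S‖ = a + c := by
  apply le_antisymm
  · calc _ ≤ ‖(a : 𝕜) • (1 : E →L[𝕜] E)‖ + ‖(c : 𝕜) • S‖ := norm_sub_le _ _
      _ ≤ a * 1 + c * 1 := by
        rw [norm_smul, norm_smul, RCLike.norm_ofReal, RCLike.norm_ofReal, abs_of_nonneg ha,
          abs_of_nonneg hc]
        gcongr
        exact norm_id_le
      _ = a + c := by ring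
  · have hTv : ((a : 𝕜) • 1 - (c : 𝕜) • S) v = ((a + c : ℝ) : 𝕜) • v := by
      simp [hSv, add_smul]
    refine le_of_mul_le_mul_right ?_ (norm_pos_iff.mpr hv)
    calc (a + c) * ‖v‖ = ‖((a + c : ℝ) : 𝕜) • v‖ := by
          rw [norm_smul, RCLike.norm_ofReal, abs_of_nonneg (by positivity)]
      _ = _ := by rw [← hTv]
      _ ≤ _ := le_opNorm _ _

section CHSH

variable {n R : Type*} [CommRing R]

def chshMatrix (Q D : Matrix n n R) : Matrix (n × n) (n × n) R :=
  Q ⊗ₖ Q + Q ⊗ₖ D + D ⊗ₖ Q - D ⊗ₖ D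

theorem chshMatrix_mul_self [Fintype n] [DecidableEq n] {Q D : Matrix n n R} (hQ : Q * Q = 1)
    (hD : D * D = 1) : chshMatrix Q D * chshMatrix Q D = 4 - ⁅Q, D⁆ ⊗ₖ ⁅Q, D⁆ := by
  simp only [chshMatrix, Ring.lie_def, sub_kronecker, kronecker_sub, add_mul, mul_add, sub_mul,
    mul_sub, ← mul_kronecker_mul, hQ, hD, one_kronecker_one]
  rw [show (4 : Matrix (n × n) (n × n) R) = 1 + 1 + 1 + 1 by norm_num]
  abel

theorem chshMatrix_isHermitian [StarRing R] {Q D : Matrix n n R} (hQ : Q.IsHermitian)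
    (hD : D.IsHermitian) : (chshMatrix Q D).IsHermitian :=
  (((hQ.kronecker hQ).add (hQ.kronecker hD)).add (hD.kronecker hQ)).sub (hD.kronecker hD)

end CHSH

section Anticommuting

variable {R A : Type*} [CommRing R] [Ring A] [Algebra R A] {X Z : A}

theorem mul_self_smul_add_smul_eq_one (hX : X * X = 1) (hZ : Z * Z = 1)
    (hXZ : X * Z = -(Z * X)) {c s : R} (hcs : c ^ 2 + s ^ 2 = 1) :
    (c • Z + s • X) * (c • Z + s • X) = 1 := by
  simp only [add_mul, mul_add, smul_mul_smul, hX, hZ, hXZ]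
  linear_combination (norm := module) hcs • (1 : A)

theorem lie_smul_add_smul_neg (hZ : Z * Z = 1) (hXZ : X * Z = -(Z * X)) (c s : R) :
    ⁅c • Z + s • X, -Z⁆ = (2 * s) • (Z * X) := by
  simp only [Ring.lie_def, add_mul, mul_add, mul_neg, neg_mul, smul_mul_assoc, mul_smul_comm, hZ,
    hXZ]
  module

theorem mul_mul_self_eq_neg_one_of_anticommute (hX : X * X = 1) (hZ : Z * Z = 1)
    (hXZ : X * Z = -(Z * X)) : (Z * X) * (Z * X) = -1 := by
  rw [mul_assoc, ← mul_assoc X, hXZ, neg_mul, mul_neg, ← mul_assoc, ← mul_assoc, hZ, one_mul, hX]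

end Anticommuting

def pauliX : Matrix (Fin 2) (Fin 2) ℂ := !![0, 1; 1, 0]

def pauliZ : Matrix (Fin 2) (Fin 2) ℂ := !![1, 0; 0, -1]

theorem pauliX_mul_self : pauliX * pauliX = 1 := by
  simp [pauliX, one_fin_two]

theorem pauliZ_mul_self : pauliZ * pauliZ = 1 := by
  simp [pauliZ, one_fin_two]

theorem pauliX_mul_pauliZ : pauliX * pauliZ = -(pauliZ * pauliX) := by
  simp [pauliX, pauliZ]

theorem pauliX_isHermitian : pauliX.IsHermitian := by
  ext i j
  fin_cases i <;> fin_cases j <;> simp [pauliX]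

theorem pauliZ_isHermitian : pauliZ.IsHermitian := by
  ext i j
  fin_cases i <;> fin_cases j <;> simp [pauliZ]

noncomputable def pauliRot (θ : ℝ) : Matrix (Fin 2) (Fin 2) ℂ :=
  (Real.cos θ : ℂ) • pauliZ + (Real.sin θ : ℂ) • pauliX

theorem pauliRot_mul_self (θ : ℝ) : pauliRot θ * pauliRot θ = 1 :=
  mul_self_smul_add_smul_eq_one pauliX_mul_self pauliZ_mul_self pauliX_mul_pauliZ
    (mod_cast Real.cos_sq_add_sin_sq θ)

theorem pauliRot_isHermitian (θ : ℝ) : (pauliRot θ).IsHermitian :=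
  (pauliZ_isHermitian.smul (conj_ofReal _)).add (pauliX_isHermitian.smul (conj_ofReal _))

theorem chshMatrix_pauliRot_mul_self (θ : ℝ) :
    chshMatrix (pauliRot θ) (-pauliZ) * chshMatrix (pauliRot θ) (-pauliZ)
      = 4 - ((4 * Real.sin θ ^ 2 : ℝ) : ℂ) • (pauliZ * pauliX) ⊗ₖ (pauliZ * pauliX) := by
  rw [chshMatrix_mul_self (pauliRot_mul_self θ) (by rw [neg_mul_neg, pauliZ_mul_self]), pauliRot,
    lie_smul_add_smul_neg pauliZ_mul_self pauliX_mul_pauliZ, smul_kronecker, kronecker_smul,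
    smul_smul]
  push_cast
  ring_nf

theorem kronecker_pauliZ_mul_pauliX_mul_self :
    (pauliZ * pauliX) ⊗ₖ (pauliZ * pauliX) * (pauliZ * pauliX) ⊗ₖ (pauliZ * pauliX) = 1 := by
  rw [← mul_kronecker_mul,
    mul_mul_self_eq_neg_one_of_anticommute pauliX_mul_self pauliZ_mul_self pauliX_mul_pauliZ,
    neg_kronecker_neg, one_kronecker_one]

theorem kronecker_pauliZ_mul_pauliX_isHermitian :
    ((pauliZ * pauliX) ⊗ₖ (pauliZ * pauliX)).IsHermitian := by
  have hZX : (pauliZ * pauliX)ᴴ = -(pauliZ * pauliX) := by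
    rw [conjTranspose_mul, pauliX_isHermitian.eq, pauliZ_isHermitian.eq, pauliX_mul_pauliZ]
  rw [IsHermitian, conjTranspose_kronecker, hZX, neg_kronecker_neg]

theorem norm_toEuclideanCLM_kronecker_pauliZ_mul_pauliX :
    ‖toEuclideanCLM (𝕜 := ℂ) ((pauliZ * pauliX) ⊗ₖ (pauliZ * pauliX))‖ = 1 :=
  (kronecker_pauliZ_mul_pauliX_isHermitian.isSelfAdjoint.map _).norm_eq_one_of_mul_self_eq_one
    (by rw [← map_mul, kronecker_pauliZ_mul_pauliX_mul_self, map_one])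

theorem toEuclideanCLM_kronecker_pauliZ_mul_pauliX_apply :
    toEuclideanCLM (𝕜 := ℂ) ((pauliZ * pauliX) ⊗ₖ (pauliZ * pauliX))
        (WithLp.toLp 2 (Pi.single (0, 0) 1 - Pi.single (1, 1) 1))
      = -WithLp.toLp 2 (Pi.single (0, 0) 1 - Pi.single (1, 1) 1) := by
  rw [toEuclideanCLM_toLp, ← WithLp.toLp_neg]
  congr 1
  ext ⟨i, j⟩
  fin_cases i <;> fin_cases j <;>
    simp [pauliX, pauliZ, mulVec, dotProduct, Fintype.sum_prod_type, Pi.single_apply]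

theorem chsh_norm_hybrid_general (θ : ℝ)
    (σx σz QR DR : Matrix (Fin 2) (Fin 2) ℂ)
    (hσx : σx = !![0, 1; 1, 0]) (hσz : σz = !![1, 0; 0, -1])
    (hQR : QR = (Real.cos θ : ℂ) • σz + (Real.sin θ : ℂ) • σx)
    (hDR : DR = -σz) :
    ‖Matrix.toEuclideanCLM (𝕜 := ℂ)
        (QR ⊗ₖ QR + QR ⊗ₖ DR + DR ⊗ₖ QR - DR ⊗ₖ DR)‖
      = 2 * Real.sqrt (1 + Real.sin θ ^ 2) := by
  obtain rfl : σx = pauliX := hσx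
  obtain rfl : σz = pauliZ := hσz
  obtain rfl : QR = pauliRot θ := hQR
  subst hDR
  change ‖toEuclideanCLM (𝕜 := ℂ) (chshMatrix (pauliRot θ) (-pauliZ))‖ = _
  set T := toEuclideanCLM (𝕜 := ℂ) (chshMatrix (pauliRot θ) (-pauliZ))
  have hT : IsSelfAdjoint T :=
    (chshMatrix_isHermitian (pauliRot_isHermitian θ) pauliZ_isHermitian.neg).isSelfAdjoint.map _
  have hTT : T * T = ((4 : ℝ) : ℂ) • 1 - ((4 * Real.sin θ ^ 2 : ℝ) : ℂ) •
      toEuclideanCLM (𝕜 := ℂ) ((pauliZ * pauliX) ⊗ₖ (pauliZ * pauliX)) := by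
    rw [← map_mul, chshMatrix_pauliRot_mul_self, map_sub, map_smul, map_ofNat,
      ← Algebra.algebraMap_eq_smul_one, ofReal_ofNat, map_ofNat]
  have hTT_norm := ContinuousLinearMap.norm_smul_one_sub_smul_of_apply_eq_neg
    norm_toEuclideanCLM_kronecker_pauliZ_mul_pauliX.le
    (fun h => by simpa using congrArg (· (0, 0)) h)
    toEuclideanCLM_kronecker_pauliZ_mul_pauliX_apply (a := 4) (c := 4 * Real.sin θ ^ 2)
    (by norm_num) (by positivity)
  simp only [RCLike.ofReal_eq_complex_ofReal, ← hTT] at hTT_norm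
  have hT_sq : ‖T‖ ^ 2 = 2 ^ 2 * (1 + Real.sin θ ^ 2) := by
    rw [← hT.norm_mul_self, hTT_norm]
    ring
  rw [← Real.sqrt_sq (norm_nonneg T), hT_sq, Real.sqrt_mul (by norm_num),
    Real.sqrt_sq (by norm_num)]

/-- For `θ ∈ (0, π)`, with `Q_R = cos θ·σ_z + sin θ·σ_x`, `D_R = −σ_z` and the CHSH
operator `𝓑 = Q_R⊗Q_R + Q_R⊗D_R + D_R⊗Q_R − D_R⊗D_R`, one has `‖𝓑‖ = 2√(1 + sin²θ)`
(operator norm). -/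
theorem chsh_norm_hybrid (θ : ℝ) (hθ : θ ∈ Set.Ioo 0 Real.pi)
    (σx σz QR DR : Matrix (Fin 2) (Fin 2) ℂ)
    (hσx : σx = !![0, 1; 1, 0]) (hσz : σz = !![1, 0; 0, -1])
    (hQR : QR = (Real.cos θ : ℂ) • σz + (Real.sin θ : ℂ) • σx)
    (hDR : DR = -σz) :
    ‖Matrix.toEuclideanCLM (𝕜 := ℂ)
        (QR ⊗ₖ QR + QR ⊗ₖ DR + DR ⊗ₖ QR - DR ⊗ₖ DR)‖
      = 2 * Real.sqrt (1 + Real.sin θ ^ 2) :=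
  chsh_norm_hybrid_general θ σx σz QR DR hσx hσz hQR hDR
end

section
/- For every n ≥ 1, ∫_{ℝ⁺} φ₀(x) φ_{2n+1}(x) dx = (−1)ⁿ (2n)! / (√(2π(2n+1)!) · 2ⁿ n!), where φ_k denotes the k-th Hermite function. -/
/-- The physicists' Hermite polynomials, via the recurrence
`H_{n+2}(x) = 2x·H_{n+1}(x) − 2(n+1)·H_n(x)`, `H₀ = 1`, `H₁(x) = 2x`. -/
noncomputable def physHermite : ℕ → ℝ → ℝ
  | 0, _ => 1
  | 1, x => 2 * x
  | (n + 2), x => 2 * x * physHermite (n + 1) x - 2 * (n + 1) * physHermite n x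

/-- The `n`-th Hermite function `φ_n(x) = (2ⁿ n! √π)^{−1/2} H_n(x) e^{−x²/2}`. -/
noncomputable def hermiteFun (n : ℕ) (x : ℝ) : ℝ :=
  Real.sqrt ((2 ^ n * (n.factorial : ℝ) * Real.sqrt Real.pi))⁻¹
    * physHermite n x * Real.exp (-x ^ 2 / 2)

/-!
Since `(H_m e^{-x²})' = -H_{m+1} e^{-x²}`, the fundamental theorem of calculus on `[0, ∞)`
gives `∫₀^∞ H_{m+1} e^{-x²} = H_m(0)`. As `φ₀ φ_{2n+1} = c H_{2n+1} e^{-x²}`, the integral is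
`c H_{2n}(0)`, and the recurrence at `x = 0` gives `H_{2n}(0) = (-1)ⁿ (2n)! / n!`.
-/

open Real MeasureTheory Set Filter Topology Polynomial

/-- `H_k' = 2k H_{k-1}`; the case split avoids the truncated `k - 1` at `k = 0`. -/
noncomputable def physHermiteDeriv : ℕ → ℝ → ℝ
  | 0, _ => 0
  | (k + 1), x => 2 * (k + 1) * physHermite k x

lemma physHermite_succ (k : ℕ) (x : ℝ) :
    physHermite (k + 1) x = 2 * x * physHermite k x - physHermiteDeriv k x := by
  cases k <;> simp [physHermite, physHermiteDeriv]

lemma hasDerivAt_physHermite : ∀ (k : ℕ) (x : ℝ),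
    HasDerivAt (physHermite k) (physHermiteDeriv k x) x
  | 0, x => by simpa [physHermite, physHermiteDeriv] using hasDerivAt_const x (1 : ℝ)
  | 1, x => by
      simpa [funext_iff, physHermite, physHermiteDeriv] using (hasDerivAt_id x).const_mul (2 : ℝ)
  | (k + 2), x => by
      have hrec : physHermite (k + 2)
          = fun y => 2 * y * physHermite (k + 1) y - 2 * (k + 1) * physHermite k y := rfl
      rw [hrec]
      refine (((hasDerivAt_id x).const_mul 2).fun_mul (hasDerivAt_physHermite (k + 1) x)).fun_sub
        ((hasDerivAt_physHermite k x).const_mul (2 * ((k : ℝ) + 1))) |>.congr_deriv ?_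
      simp only [physHermiteDeriv, physHermite_succ k x, id]
      push_cast
      ring

lemma hasDerivAt_physHermite_mul_exp_neg_sq (k : ℕ) (x : ℝ) :
    HasDerivAt (fun y => physHermite k y * exp (-y ^ 2))
      (-(physHermite (k + 1) x * exp (-x ^ 2))) x := by
  refine (hasDerivAt_physHermite k x).fun_mul ((hasDerivAt_pow 2 x).fun_neg.exp) |>.congr_deriv ?_
  rw [physHermite_succ]
  ring

lemma exists_eval_eq_physHermite : ∀ k : ℕ, ∃ p : ℝ[X], ∀ x, p.eval x = physHermite k x
  | 0 => ⟨1, fun x => by simp [physHermite]⟩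
  | 1 => ⟨C 2 * X, fun x => by simp [physHermite]⟩
  | (k + 2) => by
      obtain ⟨p, hp⟩ := exists_eval_eq_physHermite k
      obtain ⟨q, hq⟩ := exists_eval_eq_physHermite (k + 1)
      exact ⟨C 2 * X * q - C (2 * ((k : ℝ) + 1)) * p, fun x => by simp [physHermite, hp, hq]⟩

lemma integrableOn_Ioi_eval_mul_exp_neg_sq (p : ℝ[X]) :
    IntegrableOn (fun x => p.eval x * exp (-x ^ 2)) (Ioi 0) := by
  induction p using Polynomial.induction_on' with
  | monomial m c =>
      have h := integrableOn_rpow_mul_exp_neg_mul_sq one_pos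
        (neg_one_lt_zero.trans_le (Nat.cast_nonneg m))
      exact IntegrableOn.congr_fun (h.const_mul c) (fun x _ => by simp [mul_assoc]) measurableSet_Ioi
  | add p q hp hq =>
      exact (hp.add hq).congr_fun (fun x _ => by simp [add_mul]) measurableSet_Ioi

lemma integrableOn_Ioi_physHermite_mul_exp_neg_sq (k : ℕ) :
    IntegrableOn (fun x => physHermite k x * exp (-x ^ 2)) (Ioi 0) := by
  obtain ⟨p, hp⟩ := exists_eval_eq_physHermite k
  simpa [hp] using integrableOn_Ioi_eval_mul_exp_neg_sq p

lemma integral_Ioi_physHermite_succ_mul_exp_neg_sq (m : ℕ) :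
    ∫ x in Ioi 0, physHermite (m + 1) x * exp (-x ^ 2) = physHermite m 0 := by
  have hderiv (x : ℝ) : HasDerivAt (fun y => -(physHermite m y * exp (-y ^ 2)))
      (physHermite (m + 1) x * exp (-x ^ 2)) x := by
    simpa using (hasDerivAt_physHermite_mul_exp_neg_sq m x).fun_neg
  have hlim : Tendsto (fun y => -(physHermite m y * exp (-y ^ 2))) atTop (𝓝 0) :=
    tendsto_zero_of_hasDerivAt_of_integrableOn_Ioi (fun x _ => hderiv x)
      (integrableOn_Ioi_physHermite_mul_exp_neg_sq (m + 1))
      (integrableOn_Ioi_physHermite_mul_exp_neg_sq m).neg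
  rw [integral_Ioi_of_hasDerivAt_of_tendsto' (fun x _ => hderiv x)
    (integrableOn_Ioi_physHermite_mul_exp_neg_sq (m + 1)) hlim]
  simp

lemma physHermite_two_mul_zero : ∀ n : ℕ,
    physHermite (2 * n) 0 = (-1 : ℝ) ^ n * (2 * n).factorial / n.factorial
  | 0 => by simp [physHermite]
  | (n + 1) => by
      have hrec : physHermite (2 * n + 2) 0 = -(2 * (2 * n + 1)) * physHermite (2 * n) 0 := by
        simp [physHermite]
      rw [show 2 * (n + 1) = 2 * n + 2 by ring, hrec, physHermite_two_mul_zero n]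
      push_cast [Nat.factorial_succ]
      field_simp
      ring

lemma hermiteFun_mul_hermiteFun (j k : ℕ) (x : ℝ) :
    hermiteFun j x * hermiteFun k x
      = (√(2 ^ (j + k) * j.factorial * k.factorial * π))⁻¹
        * (physHermite j x * physHermite k x * exp (-x ^ 2)) := by
  have hexp : exp (-x ^ 2 / 2) * exp (-x ^ 2 / 2) = exp (-x ^ 2) := by
    rw [← exp_add]; ring_nf
  have hnorm : √(2 ^ j * (j.factorial : ℝ) * √π)⁻¹ * √(2 ^ k * (k.factorial : ℝ) * √π)⁻¹
      = (√(2 ^ (j + k) * j.factorial * k.factorial * π))⁻¹ := by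
    rw [← sqrt_mul (by positivity), ← mul_inv, ← sqrt_inv]
    congr 2
    rw [pow_add]
    linear_combination (2 ^ j * 2 ^ k * j.factorial * k.factorial : ℝ) * mul_self_sqrt pi_pos.le
  simp only [hermiteFun, ← hnorm, ← hexp]
  ring

theorem integral_halfline_hermite_odd_general (n : ℕ) :
    ∫ x in Set.Ioi (0 : ℝ), hermiteFun 0 x * hermiteFun (2 * n + 1) x
      = (-1 : ℝ) ^ n * (2 * n).factorial
          / (Real.sqrt (2 * Real.pi * ((2 * n + 1).factorial : ℝ)) * 2 ^ n * n.factorial) := by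
  have hnorm : √(2 ^ (0 + (2 * n + 1)) * (Nat.factorial 0 : ℝ) * (2 * n + 1).factorial * π)
      = √(2 * π * (2 * n + 1).factorial) * 2 ^ n := by
    rw [← sqrt_sq (by positivity : (0 : ℝ) ≤ 2 ^ n), ← sqrt_mul (by positivity)]
    congr 1
    ring
  simp_rw [hermiteFun_mul_hermiteFun, integral_const_mul]
  simp only [physHermite, one_mul]
  rw [integral_Ioi_physHermite_succ_mul_exp_neg_sq, physHermite_two_mul_zero, hnorm]
  field_simp

/-- For `n ≥ 1`,
`∫_{ℝ⁺} φ₀ φ_{2n+1} = (−1)ⁿ (2n)! / (√(2π(2n+1)!) · 2ⁿ n!)`. -/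
theorem integral_halfline_hermite_odd (n : ℕ) (hn : 1 ≤ n) :
    ∫ x in Set.Ioi (0 : ℝ), hermiteFun 0 x * hermiteFun (2 * n + 1) x
      = (-1 : ℝ) ^ n * (2 * n).factorial
          / (Real.sqrt (2 * Real.pi * ((2 * n + 1).factorial : ℝ)) * 2 ^ n * n.factorial) :=
  integral_halfline_hermite_odd_general n
end
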